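/- arXiv:1502.04072 — 4 statements merged into one kernel-verified Lean document; each statement's English description precedes it below -/
import Mathlib

section
/- For every β ∈ (0,1), the kernel K_β(r) = (1/π) · r^(β−1) sin(βπ) / (r^(2β) + 2 r^β cos(βπ) + 1) satisfies K_β(r) ≥ 0 for all r > 0 and ∫_0^∞ K_β(r) dr = 1. -/
/-!
Completing the square, the denominator of `K_β` is `(r^β + cos βπ)² + sin² βπ`; this makes
`K_β ≥ 0` evident and shows that `K_β` is the derivative of
`F(r) = arctan ((r^β + cos βπ) / sin βπ) / (βπ)`.
Since `arctan (cot βπ) = π/2 - βπ`, the primitive rises from `F(0) = 1/(2β) - 1` to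
`F(∞) = 1/(2β)`, so the integral is `1`.
-/

open Real

/-- The spectral kernel `K_β(r) = (1/π) r^(β-1) sin(βπ) / (r^(2β) + 2 r^β cos(βπ) + 1)`. -/
noncomputable def mlKernel (β : ℝ) (r : ℝ) : ℝ :=
  (1 / π) * (r ^ (β - 1) * Real.sin (β * π)) /
    (r ^ (2 * β) + 2 * r ^ β * Real.cos (β * π) + 1)

open Set Filter Topology MeasureTheory

lemma rpow_two_mul_add_two_mul_rpow_mul_cos_add_one {r : ℝ} (hr : 0 ≤ r) (β θ : ℝ) :
    r ^ (2 * β) + 2 * r ^ β * cos θ + 1 = (r ^ β + cos θ) ^ 2 + sin θ ^ 2 := by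
  rw [mul_comm 2 β, rpow_mul hr, rpow_two]
  linear_combination -sin_sq_add_cos_sq θ

lemma mlKernel_nonneg {β r : ℝ} (hβ : β ∈ Icc (0 : ℝ) 1) (hr : 0 ≤ r) : 0 ≤ mlKernel β r := by
  have hsin : 0 ≤ sin (β * π) :=
    sin_nonneg_of_nonneg_of_le_pi (by nlinarith [pi_pos, hβ.1]) (by nlinarith [pi_pos, hβ.2])
  unfold mlKernel
  rw [rpow_two_mul_add_two_mul_rpow_mul_cos_add_one hr]
  have := rpow_nonneg hr (β - 1)
  positivity

noncomputable def mlKernelPrimitive (β r : ℝ) : ℝ :=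
  arctan ((r ^ β + cos (β * π)) / sin (β * π)) / (β * π)

lemma hasDerivAt_mlKernelPrimitive {β x : ℝ} (hsin : sin (β * π) ≠ 0) (hx : 0 < x) :
    HasDerivAt (mlKernelPrimitive β) (mlKernel β x) x := by
  have hβ : β ≠ 0 := by rintro rfl; simp at hsin
  have hu : HasDerivAt (fun r : ℝ => (r ^ β + cos (β * π)) / sin (β * π))
      (β * x ^ (β - 1) / sin (β * π)) x :=
    ((hasDerivAt_rpow_const (Or.inl hx.ne')).add_const _).div_const _
  refine (((hasDerivAt_arctan _).comp x hu).div_const (β * π)).congr_deriv ?_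
  have hden : 0 < (x ^ β + cos (β * π)) ^ 2 + sin (β * π) ^ 2 := by positivity
  unfold mlKernel
  rw [rpow_two_mul_add_two_mul_rpow_mul_cos_add_one hx.le]
  field_simp
  ring

lemma continuous_mlKernelPrimitive {β : ℝ} (hβ : 0 ≤ β) : Continuous (mlKernelPrimitive β) :=
  (continuous_arctan.comp
    (((continuous_rpow_const hβ).add continuous_const).div_const _)).div_const _

lemma tendsto_mlKernelPrimitive_atTop {β : ℝ} (hβ : 0 < β) (hsin : 0 < sin (β * π)) :
    Tendsto (mlKernelPrimitive β) atTop (𝓝 (1 / (2 * β))) := by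
  have hu : Tendsto (fun r : ℝ => (r ^ β + cos (β * π)) / sin (β * π)) atTop atTop :=
    (tendsto_atTop_add_const_right _ _ (tendsto_rpow_atTop hβ)).atTop_div_const hsin
  have hlim : π / 2 / (β * π) = 1 / (2 * β) := by field_simp
  rw [← hlim]
  exact ((tendsto_arctan_atTop.mono_right nhdsWithin_le_nhds).comp hu).div_const _

lemma mlKernelPrimitive_zero {β : ℝ} (hβ : β ∈ Ioo (0 : ℝ) 1) :
    mlKernelPrimitive β 0 = 1 / (2 * β) - 1 := by
  have hcot : cos (β * π) / sin (β * π) = tan (π / 2 - β * π) := by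
    rw [tan_pi_div_two_sub, tan_eq_sin_div_cos, inv_div]
  have harctan : arctan (cos (β * π) / sin (β * π)) = π / 2 - β * π := by
    rw [hcot, arctan_tan] <;> nlinarith [pi_pos, hβ.1, hβ.2]
  rw [mlKernelPrimitive, zero_rpow hβ.1.ne', zero_add, harctan]
  field_simp [hβ.1.ne']

lemma integral_mlKernel {β : ℝ} (hβ : β ∈ Ioo (0 : ℝ) 1) :
    ∫ r in Ioi (0 : ℝ), mlKernel β r = 1 := by
  have hsin : 0 < sin (β * π) :=
    sin_pos_of_pos_of_lt_pi (by nlinarith [pi_pos, hβ.1]) (by nlinarith [pi_pos, hβ.2])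
  rw [integral_Ioi_of_hasDerivAt_of_nonneg
      (continuous_mlKernelPrimitive hβ.1.le).continuousWithinAt
      (fun x hx => hasDerivAt_mlKernelPrimitive hsin.ne' hx)
      (fun x hx => mlKernel_nonneg (Ioo_subset_Icc_self hβ) (le_of_lt hx))
      (tendsto_mlKernelPrimitive_atTop hβ.1 hsin),
    mlKernelPrimitive_zero hβ]
  ring

/-- For `β ∈ (0,1)`, the kernel `K_β` is non-negative on `(0,∞)` and integrates to `1`. -/
theorem mlKernel_nonneg_and_integral_one (β : ℝ) (hβ : β ∈ Set.Ioo (0 : ℝ) 1) :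
    (∀ r : ℝ, 0 < r → 0 ≤ mlKernel β r) ∧
      (∫ r in Set.Ioi (0 : ℝ), mlKernel β r) = 1 :=
  ⟨fun _ hr => mlKernel_nonneg (Ioo_subset_Icc_self hβ) hr.le, integral_mlKernel hβ⟩
end

section
/- For every β ∈ (0,1), the Mittag-Leffler distribution of order β has infinite mean: ∫_0^∞ E_β(−t^β) dt = ∞. -/
open MeasureTheory

/-- The real Mittag-Leffler function of order `β`,
`E_β(x) = ∑ n, x ^ n / Γ(1 + β n)`. -/
noncomputable def mittagLefflerReal (β : ℝ) (x : ℝ) : ℝ :=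
  ∑' n : ℕ, x ^ n / Real.Gamma (1 + β * n)

/-!
The survival function `f t = E_β (-t ^ β)` solves the fractional relaxation equation, whose
integrated form is
`∫₀ᵀ f + Γ(β + 1)⁻¹ ∫₀ᵀ (T - s) ^ β f(s) ds = T`:
integrating the series termwise, the Beta integral turns the second integral into minus the tail
of the series of the first one. If `M = ∫₀^∞ f⁺` were finite, the left-hand side would be at most
`M + M T ^ β / Γ(β + 1)`, which is `o(T)` since `β < 1`.
-/

open Real Filter Set Topology

theorem rpow_le_mul_exp_mul_Gamma {q s : ℝ} (hq : 1 ≤ q) (hs : 1 ≤ s) :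
    q ^ s ≤ q * exp q * Gamma (1 + s) := by
  set k := ⌊s⌋₊
  have hk : 1 ≤ k := Nat.le_floor (by exact_mod_cast hs)
  have hks : (k : ℝ) ≤ s := Nat.floor_le (by linarith)
  have hk1 : (1 : ℝ) ≤ k := by exact_mod_cast hk
  calc q ^ s ≤ q ^ ((k + 1 : ℕ) : ℝ) := by
        gcongr
        push_cast; exact (Nat.lt_floor_add_one s).le
    _ = q * q ^ k := by rw [rpow_natCast, pow_succ']
    _ ≤ q * (exp q * k.factorial) := by
        gcongr
        have := pow_div_factorial_le_exp (x := q) (by linarith) k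
        rwa [div_le_iff₀ (by positivity)] at this
    _ = q * exp q * Gamma (k + 1) := by rw [Gamma_nat_eq_factorial, mul_assoc]
    _ ≤ q * exp q * Gamma (1 + s) := by
        gcongr
        exact Gamma_strictMonoOn_Ici.monotoneOn (by rw [mem_Ici]; linarith)
          (by rw [mem_Ici]; linarith) (by linarith)

theorem summable_pow_div_Gamma {β : ℝ} (hβ : 0 < β) (x : ℝ) :
    Summable fun n : ℕ => x ^ n / Gamma (1 + β * n) := by
  set y := 2 * |x| + 1
  have hy : 1 ≤ y := by simp only [y]; linarith [abs_nonneg x]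
  set q := y ^ β⁻¹
  have hq : 1 ≤ q := one_le_rpow hy (by positivity)
  have hr0 : 0 ≤ |x| / y := by positivity
  have hr1 : |x| / y < 1 := by rw [div_lt_one (by linarith)]; linarith [abs_nonneg x]
  refine Summable.of_norm_bounded_eventually
    ((summable_geometric_of_lt_one hr0 hr1).mul_left (q * exp q)) ?_
  rw [Nat.cofinite_eq_atTop]
  filter_upwards [(tendsto_natCast_atTop_atTop.const_mul_atTop hβ).eventually_ge_atTop 1]
    with n hn
  have hΓ : 0 < Gamma (1 + β * n) := Gamma_pos_of_pos (by positivity)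
  have hyn : y ^ n = q ^ (β * n) := by
    rw [rpow_mul (by positivity), rpow_inv_rpow (by positivity) hβ.ne', rpow_natCast]
  calc ‖x ^ n / Gamma (1 + β * n)‖ = (|x| / y) ^ n * y ^ n / Gamma (1 + β * n) := by
        rw [norm_div, norm_pow, Real.norm_eq_abs, Real.norm_of_nonneg hΓ.le, div_pow,
          div_mul_cancel₀ _ (by positivity)]
    _ ≤ (|x| / y) ^ n * (q * exp q * Gamma (1 + β * n)) / Gamma (1 + β * n) := by
        rw [hyn]; gcongr; exact rpow_le_mul_exp_mul_Gamma hq hn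
    _ = q * exp q * (|x| / y) ^ n := by field_simp

theorem integral_rpow_mul_sub_rpow {a b T : ℝ} (ha : -1 < a) (hb : -1 < b) (hT : 0 < T) :
    ∫ x in 0..T, x ^ a * (T - x) ^ b =
      T ^ (a + b + 1) * (Gamma (a + 1) * Gamma (b + 1) / Gamma (a + b + 2)) := by
  have h := Complex.betaIntegral_scaled (a + 1 : ℂ) (b + 1) hT
  rw [Complex.betaIntegral_eq_Gamma_mul_div _ _ (by simp; linarith) (by simp; linarith)] at h
  apply Complex.ofReal_injective
  rw [← intervalIntegral.integral_ofReal]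
  convert h using 1
  · refine intervalIntegral.integral_congr fun x hx => ?_
    rw [uIcc_of_le hT.le] at hx
    simp only [add_sub_cancel_right]
    push_cast
    rw [Complex.ofReal_cpow hx.1, Complex.ofReal_cpow (by linarith [hx.2])]
    push_cast; rfl
  · rw [show (a : ℂ) + 1 + (b + 1) - 1 = ((a + b + 1 : ℝ) : ℂ) by push_cast; ring,
      show (a : ℂ) + 1 + (b + 1) = ((a + b + 2 : ℝ) : ℂ) by push_cast; ring,
      show (a : ℂ) + 1 = ((a + 1 : ℝ) : ℂ) by push_cast; ring,
      show (b : ℂ) + 1 = ((b + 1 : ℝ) : ℂ) by push_cast; ring,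
      ← Complex.ofReal_cpow hT.le]
    simp only [Complex.Gamma_ofReal]
    push_cast; rfl

theorem integral_sub_rpow_mul_neg_rpow_pow_div_Gamma {β b T : ℝ} (hβ : 0 < β) (hb : 0 ≤ b)
    (hT : 0 < T) (n : ℕ) :
    ∫ s in 0..T, (T - s) ^ b * ((-(s ^ β)) ^ n / Gamma (1 + β * n)) =
      (-1) ^ n * (Gamma (b + 1) * T ^ (β * n + b + 1) / Gamma (β * n + b + 2)) := by
  calc ∫ s in 0..T, (T - s) ^ b * ((-(s ^ β)) ^ n / Gamma (1 + β * n))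
      = ∫ s in 0..T, (-1) ^ n / Gamma (β * n + 1) * (s ^ (β * n) * (T - s) ^ b) := by
        refine intervalIntegral.integral_congr fun s hs => ?_
        rw [uIcc_of_le hT.le] at hs
        rw [neg_pow, rpow_mul hs.1, rpow_natCast, add_comm (β * n)]
        ring
    _ = (-1) ^ n * (Gamma (b + 1) * T ^ (β * n + b + 1) / Gamma (β * n + b + 2)) := by
        rw [intervalIntegral.integral_const_mul,
          integral_rpow_mul_sub_rpow (by linarith [show 0 ≤ β * n by positivity]) (by linarith) hT]
        field_simp

theorem hasSum_integral_sub_rpow_mul_mittagLefflerReal {β b T : ℝ} (hβ : 0 < β) (hb : 0 ≤ b)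
    (hT : 0 < T) :
    HasSum (fun n : ℕ => (-1) ^ n * (Gamma (b + 1) * T ^ (β * n + b + 1) / Gamma (β * n + b + 2)))
      (∫ s in 0..T, (T - s) ^ b * mittagLefflerReal β (-(s ^ β))) := by
  have hcont (n : ℕ) :
      Continuous fun s : ℝ => (T - s) ^ b * ((-(s ^ β)) ^ n / Gamma (1 + β * n)) := by
    have := continuous_rpow_const hb
    have := continuous_rpow_const hβ.le
    fun_prop
  have hdom (n : ℕ) : ∀ s ∈ Ioc 0 T, ‖(T - s) ^ b * ((-(s ^ β)) ^ n / Gamma (1 + β * n))‖ ≤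
      T ^ b * ((T ^ β) ^ n / Gamma (1 + β * n)) := by
    rintro s ⟨hs0, hsT⟩
    have hsβ : 0 ≤ s ^ β := rpow_nonneg hs0.le β
    have hΓ : 0 < Gamma (1 + β * n) := Gamma_pos_of_pos (by positivity)
    rw [norm_mul, norm_div, norm_pow, norm_neg, Real.norm_of_nonneg hΓ.le,
      Real.norm_of_nonneg (rpow_nonneg (by linarith) _), Real.norm_of_nonneg hsβ]
    gcongr
    all_goals first | exact div_nonneg (pow_nonneg hsβ n) hΓ.le | linarith
  have h := intervalIntegral.hasSum_integral_of_dominated_convergence (μ := volume)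
    (f := fun s => (T - s) ^ b * mittagLefflerReal β (-(s ^ β)))
    (fun (n : ℕ) _ => T ^ b * ((T ^ β) ^ n / Gamma (1 + β * n)))
    (fun n => (hcont n).aestronglyMeasurable)
    (fun n => ae_of_all _ fun s hs => hdom n s (uIoc_of_le hT.le ▸ hs))
    (ae_of_all _ fun _ _ => (summable_pow_div_Gamma hβ _).mul_left _)
    intervalIntegrable_const
    (ae_of_all _ fun s _ => (summable_pow_div_Gamma hβ _).hasSum.mul_left _)
  simpa only [integral_sub_rpow_mul_neg_rpow_pow_div_Gamma hβ hb hT] using h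

theorem integral_mittagLefflerReal_add_integral_sub_rpow_mul {β T : ℝ} (hβ : 0 < β) (hT : 0 < T) :
    (∫ s in 0..T, mittagLefflerReal β (-(s ^ β))) +
      (∫ s in 0..T, (T - s) ^ β * mittagLefflerReal β (-(s ^ β))) / Gamma (β + 1) = T := by
  set c : ℕ → ℝ := fun n => (-1) ^ n * (T ^ (β * n + 1) / Gamma (β * n + 2))
  have hI : HasSum c (∫ s in 0..T, mittagLefflerReal β (-(s ^ β))) := by
    simpa [c] using hasSum_integral_sub_rpow_mul_mittagLefflerReal hβ le_rfl hT
  have hK := (hasSum_integral_sub_rpow_mul_mittagLefflerReal hβ hβ.le hT).div_const (-Gamma (β + 1))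
  have hc : (fun n => c (n + 1)) = fun n : ℕ =>
      (-1) ^ n * (Gamma (β + 1) * T ^ (β * n + β + 1) / Gamma (β * n + β + 2)) / -Gamma (β + 1) := by
    funext n
    simp only [c]
    push_cast
    rw [show β * (n + 1) + 1 = β * n + β + 1 by ring, show β * (n + 1) + 2 = β * n + β + 2 by ring]
    field_simp
    ring
  have h := ((hasSum_nat_add_iff' 1).mpr hI).unique (hc ▸ hK)
  simp only [Finset.sum_range_one, c, pow_zero, CharP.cast_eq_zero, mul_zero, zero_add, rpow_one,
    Gamma_two, div_one, one_mul, div_neg] at h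
  linarith

theorem integral_le_toReal_lintegral_ofReal {α : Type*} [MeasurableSpace α] {μ : Measure α}
    (f : α → ℝ) : ∫ x, f x ∂μ ≤ (∫⁻ x, ENNReal.ofReal (f x) ∂μ).toReal := by
  by_cases hf : Integrable f μ
  · rw [integral_eq_lintegral_pos_part_sub_lintegral_neg_part hf]
    exact sub_le_self _ ENNReal.toReal_nonneg
  · rw [integral_undef hf]
    exact ENNReal.toReal_nonneg

theorem intervalIntegral_mul_le_mul_toReal_setLIntegral_Ioi {φ f : ℝ → ℝ} {c T : ℝ}
    (hT : 0 ≤ T) (hc : 0 ≤ c) (hφ : ∀ s ∈ Ioc 0 T, 0 ≤ φ s ∧ φ s ≤ c)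
    (hf : ∫⁻ s in Ioi 0, ENNReal.ofReal (f s) ≠ ⊤) :
    ∫ s in 0..T, φ s * f s ≤ c * (∫⁻ s in Ioi 0, ENNReal.ofReal (f s)).toReal := by
  have hmono : ∫⁻ s in Ioc 0 T, ENNReal.ofReal (φ s * f s) ≤
      ∫⁻ s in Ioi 0, ENNReal.ofReal c * ENNReal.ofReal (f s) :=
    calc ∫⁻ s in Ioc 0 T, ENNReal.ofReal (φ s * f s)
        ≤ ∫⁻ s in Ioc 0 T, ENNReal.ofReal c * ENNReal.ofReal (f s) :=
          setLIntegral_mono' measurableSet_Ioc fun s hs => by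
            rw [ENNReal.ofReal_mul (hφ s hs).1]
            gcongr
            exact (hφ s hs).2
      _ ≤ ∫⁻ s in Ioi 0, ENNReal.ofReal c * ENNReal.ofReal (f s) :=
          lintegral_mono_set Ioc_subset_Ioi_self
  rw [lintegral_const_mul' _ _ ENNReal.ofReal_ne_top] at hmono
  calc ∫ s in 0..T, φ s * f s ≤ (∫⁻ s in Ioc 0 T, ENNReal.ofReal (φ s * f s)).toReal := by
        rw [intervalIntegral.integral_of_le hT]
        exact integral_le_toReal_lintegral_ofReal _
    _ ≤ c * (∫⁻ s in Ioi 0, ENNReal.ofReal (f s)).toReal := by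
        refine (ENNReal.toReal_mono (ENNReal.mul_ne_top ENNReal.ofReal_ne_top hf) hmono).trans ?_
        rw [ENNReal.toReal_mul, ENNReal.toReal_ofReal hc]

theorem eventually_add_mul_rpow_lt_self {β : ℝ} (hβ : β < 1) (a b : ℝ) :
    ∀ᶠ T in atTop, a + b * T ^ β < T := by
  have h : Tendsto (fun T : ℝ => a * T⁻¹ + b * T ^ (β - 1)) atTop (𝓝 0) := by
    have := (tendsto_inv_atTop_zero.const_mul a).add
      ((tendsto_rpow_neg_atTop (by linarith : 0 < 1 - β)).const_mul b)
    simpa using this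
  filter_upwards [h.eventually (gt_mem_nhds one_pos), eventually_gt_atTop 0] with T h1 hT
  calc a + b * T ^ β = T * (a * T⁻¹ + b * T ^ (β - 1)) := by
        rw [rpow_sub_one hT.ne']; field_simp
    _ < T := mul_lt_of_lt_one_right hT h1

/-- For `β ∈ (0,1)`, the Mittag-Leffler distribution of order `β` has infinite mean:
the integral of its survival function `E_β(−t^β)` over `(0,∞)` is infinite. -/
theorem mittagLeffler_infinite_mean (β : ℝ) (hβ : β ∈ Set.Ioo (0 : ℝ) 1) :
    ∫⁻ t in Set.Ioi (0 : ℝ), ENNReal.ofReal (mittagLefflerReal β (-(t ^ β))) = ⊤ := by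
  obtain ⟨hβ0, hβ1⟩ := hβ
  by_contra hfin
  set M := (∫⁻ t in Ioi (0 : ℝ), ENNReal.ofReal (mittagLefflerReal β (-(t ^ β)))).toReal
  have hΓ : 0 < Gamma (β + 1) := Gamma_pos_of_pos (by linarith)
  have hbound : ∀ T > 0, T ≤ M + M / Gamma (β + 1) * T ^ β := by
    intro T hT
    have hI := intervalIntegral_mul_le_mul_toReal_setLIntegral_Ioi (φ := fun _ => 1) hT.le
      zero_le_one (fun _ _ => ⟨zero_le_one, le_rfl⟩) hfin
    have hK := intervalIntegral_mul_le_mul_toReal_setLIntegral_Ioi (φ := fun s => (T - s) ^ β)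
      hT.le (rpow_nonneg hT.le β) (fun s hs => ⟨rpow_nonneg (by linarith [hs.2]) β,
        rpow_le_rpow (by linarith [hs.2]) (by linarith [hs.1]) hβ0.le⟩) hfin
    simp only [one_mul] at hI
    calc T = (∫ s in 0..T, mittagLefflerReal β (-(s ^ β))) +
          (∫ s in 0..T, (T - s) ^ β * mittagLefflerReal β (-(s ^ β))) / Gamma (β + 1) :=
          (integral_mittagLefflerReal_add_integral_sub_rpow_mul hβ0 hT).symm
      _ ≤ M + T ^ β * M / Gamma (β + 1) := add_le_add hI (div_le_div_of_nonneg_right hK hΓ.le)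
      _ = M + M / Gamma (β + 1) * T ^ β := by ring
  obtain ⟨T, hT, hT0⟩ :=
    ((eventually_add_mul_rpow_lt_self hβ1 M (M / Gamma (β + 1))).and (eventually_gt_atTop 0)).exists
  exact (hbound T hT0).not_gt hT
end

section
/- For every β ∈ (0,1], every t ≥ 0, and every complex number z, the probability generating function of the fractional Poisson probabilities satisfies Σ_{n=0}^∞ z^n · (t^(βn)/n!) E_β^(n)(−t^β) = E_β((z − 1) t^β). In particular, taking z = 1, the fractional Poisson probabilities sum to one: Σ_{n=0}^∞ (t^(βn)/n!) E_β^(n)(−t^β) = 1. -/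
/-- The Mittag-Leffler function of order `β`, defined by the power series
`E_β(z) = ∑ n, z ^ n / Γ(1 + β n)`. -/
noncomputable def mittagLeffler (β : ℝ) (z : ℂ) : ℂ :=
  ∑' n : ℕ, z ^ n / Complex.Gamma (1 + (β : ℂ) * n)

/-- The fractional Poisson probability of order `β`:
`P_n(t) = (t^(βn)/n!) E_β^(n)(−t^β)`, where `E_β^(n)` is the `n`-th derivative of the
Mittag-Leffler function. -/
noncomputable def fracPoissonProb (β : ℝ) (n : ℕ) (t : ℝ) : ℂ :=
  ((t ^ (β * n) / n.factorial : ℝ) : ℂ) * iteratedDeriv n (mittagLeffler β) (-((t ^ β : ℝ) : ℂ))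

/-!
`E_β` is entire for `β > 0`: log-convexity of `Γ` gives `Γ(1 + βn) / Γ(1 + β(n+1)) ≤ (βn)^(-β) → 0`,
so the ratio test makes its power series converge everywhere. An entire function equals its Taylor
series about any point, and expanding `E_β` about `-t^β` and evaluating at `(z - 1) t^β` produces
exactly `∑ zⁿ Pₙ(t)`. At `z = 1` the right-hand side is `E_β(0) = 1`.
-/

open Filter Topology

namespace Real

/-- The slope of `log ∘ Γ` on `[x, x + a]` dominates its slope on `[x - 1, x]`, which is
`log (x - 1)` by the functional equation. -/
theorem rpow_mul_Gamma_le_Gamma_add {x a : ℝ} (hx : 1 < x) (ha : 0 < a) :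
    (x - 1) ^ a * Gamma x ≤ Gamma (x + a) := by
  have hx1 : 0 < x - 1 := by linarith
  have hGamma : Gamma x = (x - 1) * Gamma (x - 1) := by
    simpa using Gamma_add_one hx1.ne'
  have hslope := convexOn_log_Gamma.slope_mono_adjacent (Set.mem_Ioi.2 hx1)
    (Set.mem_Ioi.2 (by linarith : 0 < x + a)) (by linarith : x - 1 < x) (by linarith : x < x + a)
  simp only [Function.comp_apply, sub_sub_cancel, div_one, add_sub_cancel_left] at hslope
  rw [le_div_iff₀ ha, hGamma, log_mul hx1.ne' (Gamma_pos_of_pos hx1).ne'] at hslope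
  rw [← log_le_log_iff (by positivity) (Gamma_pos_of_pos (by linarith)),
    log_mul (by positivity) (Gamma_pos_of_pos (by linarith)).ne', log_rpow hx1, hGamma,
    log_mul hx1.ne' (Gamma_pos_of_pos hx1).ne']
  linarith

theorem tendsto_Gamma_one_add_mul_div_succ {β : ℝ} (hβ : 0 < β) :
    Tendsto (fun n : ℕ => Gamma (1 + β * n) / Gamma (1 + β * (n + 1))) atTop (𝓝 0) := by
  have hlin : Tendsto (fun n : ℕ => β * n) atTop atTop :=
    tendsto_natCast_atTop_atTop.const_mul_atTop hβ
  refine tendsto_of_tendsto_of_tendsto_of_le_of_le' tendsto_const_nhds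
    ((tendsto_rpow_neg_atTop hβ).comp hlin) (Eventually.of_forall fun n => by positivity) ?_
  filter_upwards [eventually_ge_atTop 1] with n hn
  have hβn : 0 < β * n := mul_pos hβ (by exact_mod_cast hn)
  have hbound := rpow_mul_Gamma_le_Gamma_add (by linarith : 1 < 1 + β * n) hβ
  rw [add_sub_cancel_left, add_assoc, ← mul_add_one] at hbound
  rw [Function.comp_apply, div_le_iff₀ (by positivity), rpow_neg hβn.le, inv_mul_eq_div,
    le_div_iff₀ (by positivity), mul_comm]
  exact hbound

end Real

theorem Complex.norm_Gamma_one_add_mul_natCast {β : ℝ} (hβ : 0 ≤ β) (n : ℕ) :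
    ‖Gamma (1 + β * n)‖ = Real.Gamma (1 + β * n) := by
  rw [← ofReal_natCast, ← ofReal_mul, ← ofReal_one, ← ofReal_add, Gamma_ofReal, norm_real,
    Real.norm_of_nonneg (by positivity)]

theorem Complex.tsum_pow_mul_taylorCoeff_eq {f : ℂ → ℂ} (hf : Differentiable ℂ f) (s z : ℂ) :
    ∑' n : ℕ, z ^ n * (s ^ n / n.factorial * iteratedDeriv n f (-s)) = f ((z - 1) * s) := by
  rw [← taylorSeries_eq_of_entire hf (-s)]
  refine tsum_congr fun n => ?_
  rw [show (z - 1) * s - -s = z * s by ring, smul_eq_mul, smul_eq_mul, mul_pow]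
  ring

noncomputable def mittagLefflerSeries (β : ℝ) : FormalMultilinearSeries ℂ ℂ ℂ :=
  .ofScalars ℂ fun n : ℕ => (Complex.Gamma (1 + β * n))⁻¹

theorem mittagLeffler_eq_sum (β : ℝ) : mittagLeffler β = (mittagLefflerSeries β).sum := by
  ext z
  refine tsum_congr fun n => ?_
  rw [mittagLefflerSeries, FormalMultilinearSeries.ofScalars_apply_eq, smul_eq_mul, inv_mul_eq_div]

theorem mittagLefflerSeries_radius {β : ℝ} (hβ : 0 < β) : (mittagLefflerSeries β).radius = ⊤ := by
  refine FormalMultilinearSeries.ofScalars_radius_eq_top_of_tendsto _ _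
    (Eventually.of_forall fun n => inv_ne_zero (Complex.Gamma_ne_zero_of_re_pos ?_)) ?_
  · simp only [Complex.add_re, Complex.one_re, Complex.mul_re, Complex.ofReal_re,
      Complex.natCast_re, Complex.ofReal_im, Complex.natCast_im, mul_zero, sub_zero]
    positivity
  · refine (Real.tendsto_Gamma_one_add_mul_div_succ hβ).congr fun n => ?_
    rw [norm_inv, norm_inv, inv_div_inv, Complex.norm_Gamma_one_add_mul_natCast hβ.le,
      Complex.norm_Gamma_one_add_mul_natCast hβ.le, Nat.cast_succ]

theorem differentiable_mittagLeffler {β : ℝ} (hβ : 0 < β) :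
    Differentiable ℂ (mittagLeffler β) := by
  have hdiff := ((mittagLefflerSeries β).hasFPowerSeriesOnBall
    (by simp [mittagLefflerSeries_radius hβ])).differentiableOn
  rw [mittagLefflerSeries_radius hβ, Metric.eball_top, differentiableOn_univ] at hdiff
  rwa [mittagLeffler_eq_sum]

@[simp]
theorem mittagLeffler_zero (β : ℝ) : mittagLeffler β 0 = 1 := by
  rw [mittagLeffler, tsum_eq_single 0 fun n hn => by simp [zero_pow hn]]
  simp

theorem fracPoissonProb_eq {β t : ℝ} (ht : 0 ≤ t) (n : ℕ) :
    fracPoissonProb β n t = ((t ^ β : ℝ) : ℂ) ^ n / n.factorial *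
      iteratedDeriv n (mittagLeffler β) (-((t ^ β : ℝ) : ℂ)) := by
  rw [fracPoissonProb, Real.rpow_mul ht, Real.rpow_natCast]
  push_cast
  rfl

/-- For `β ∈ (0,1]`, `t ≥ 0` and `z ∈ ℂ`, the probability generating function of the
fractional Poisson probabilities satisfies
`∑ n, z^n (t^(βn)/n!) E_β^(n)(−t^β) = E_β((z−1) t^β)`; in particular, at `z = 1` the
fractional Poisson probabilities sum to one. -/
theorem fracPoisson_pgf (β : ℝ) (hβ : β ∈ Set.Ioc (0 : ℝ) 1) (t : ℝ) (ht : 0 ≤ t) :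
    (∀ z : ℂ, (∑' n : ℕ, z ^ n * fracPoissonProb β n t) =
        mittagLeffler β ((z - 1) * ((t ^ β : ℝ) : ℂ))) ∧
      (∑' n : ℕ, fracPoissonProb β n t) = 1 := by
  have pgf (z : ℂ) : (∑' n : ℕ, z ^ n * fracPoissonProb β n t) =
      mittagLeffler β ((z - 1) * ((t ^ β : ℝ) : ℂ)) := by
    simp only [fracPoissonProb_eq ht]
    exact Complex.tsum_pow_mul_taylorCoeff_eq (differentiable_mittagLeffler hβ.1) _ z
  exact ⟨pgf, by simpa using pgf 1⟩
end

section
/- Let M ≥ 1 be an integer, β ∈ (0,1), and let Q = (q_{k,j}) be the transition matrix of the undelayed (α = 0) Ehrenfest chain on {0, 1, …, M}. For i, j ∈ {0, …, M} and s > 0 define the Laplace-domain solution p̃_{i,j}(s) = Σ_{n=0}^∞ (Q^n)_{i,j} · s^(β−1)/(1 + s^β)^(n+1), and adopt the convention p̃_{i,−1} ≡ 0 and p̃_{i,M+1} ≡ 0. Then for every i, every 1 ≤ j ≤ M−1, and every s > 0: (1 + s^β) p̃_{i,j}(s) = s^(β−1) δ_{ij} + q_{j−1,j} p̃_{i,j−1}(s)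 + q_{j+1,j} p̃_{i,j+1}(s). -/
/-- Transition matrix of the undelayed (`α = 0`) Ehrenfest chain on `{0, 1, …, M}`:
`q (k, k−1) = k/M`, `q (k, k+1) = (M−k)/M`, and `0` otherwise. -/
noncomputable def ehrenfestQ0 (M : ℕ) : Matrix (Fin (M + 1)) (Fin (M + 1)) ℝ :=
  fun k j =>
    if (j : ℕ) + 1 = (k : ℕ) then (k : ℕ) / M
    else if (j : ℕ) = (k : ℕ) + 1 then ((M : ℝ) - (k : ℕ)) / M
    else 0

/-- The Laplace-domain solution `p̃_{i,j}(s) = ∑_n (Q^n)_{i,j} s^(β−1)/(1+s^β)^(n+1)`. -/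
noncomputable def rladLaplaceSol (M : ℕ) (β : ℝ) (i j : Fin (M + 1)) (s : ℝ) : ℝ :=
  ∑' n : ℕ, (ehrenfestQ0 M ^ n) i j * (s ^ (β - 1) / (1 + s ^ β) ^ (n + 1))

/-!
With `u = 1 + s^β > 1` and `c = s^(β-1)`, the row `p̃ᵢ` is the series `∑ₙ c eᵢ Qⁿ / uⁿ⁺¹`,
which converges because `Q` is stochastic, so the entries of `Qⁿ` lie in `[0, 1]`. Shifting the
summation index gives the resolvent identity `u p̃ᵢ = c eᵢ + p̃ᵢ Q`, and column `j` of `Q` is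
supported on `j ± 1`.
-/

lemma summable_mul_div_pow_succ {a : ℕ → ℝ} {C : ℝ} (ha : ∀ m, |a m| ≤ C) (c : ℝ) {u : ℝ}
    (hu : 1 < u) : Summable fun m : ℕ => a m * (c / u ^ (m + 1)) := by
  have hu0 : 0 < u := by linarith
  refine Summable.of_norm_bounded ((summable_geometric_of_lt_one (inv_nonneg.2 hu0.le)
    (inv_lt_one_of_one_lt₀ hu)).mul_left (C * |c| / u)) fun m => ?_
  rw [Real.norm_eq_abs, abs_mul, abs_div, abs_of_pos (pow_pos hu0 _), inv_pow, pow_succ]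
  calc |a m| * (|c| / (u ^ m * u)) ≤ C * (|c| / (u ^ m * u)) := by gcongr; exact ha m
    _ = C * |c| / u * (u ^ m)⁻¹ := by field_simp

namespace Matrix

variable {n : Type*} [Fintype n] [DecidableEq n]

lemma abs_pow_apply_le_one_of_mem_rowStochastic {A : Matrix n n ℝ}
    (hA : A ∈ rowStochastic ℝ n) (m : ℕ) (i j : n) : |(A ^ m) i j| ≤ 1 := by
  have hAm := Submonoid.pow_mem _ hA m
  exact abs_le.2 ⟨by linarith [nonneg_of_mem_rowStochastic hAm (i := i) (j := j)],
    le_one_of_mem_rowStochastic hAm⟩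

lemma mul_tsum_pow_apply_div_pow (A : Matrix n n ℝ) (c : ℝ) {u : ℝ} (hu : u ≠ 0) (i j : n)
    (hsum : ∀ k, Summable fun m : ℕ => (A ^ m) i k * (c / u ^ (m + 1))) :
    u * ∑' m : ℕ, (A ^ m) i j * (c / u ^ (m + 1)) =
      c * (if i = j then 1 else 0) + ∑ k, A k j * ∑' m : ℕ, (A ^ m) i k * (c / u ^ (m + 1)) := by
  have hshift : ∀ m : ℕ, u * ((A ^ (m + 1)) i j * (c / u ^ (m + 1 + 1))) =
      ∑ k, A k j * ((A ^ m) i k * (c / u ^ (m + 1))) := by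
    intro m
    rw [pow_succ, mul_apply, Finset.sum_mul, Finset.mul_sum]
    refine Finset.sum_congr rfl fun k _ => ?_
    field_simp
    ring
  rw [← tsum_mul_left, ((hsum j).mul_left u).tsum_eq_zero_add, tsum_congr hshift,
    Summable.tsum_finsetSum fun k _ => (hsum k).mul_left _]
  simp only [tsum_mul_left, pow_zero, one_apply, zero_add, pow_one]
  congr 1
  field_simp

end Matrix

lemma Fin.sum_ite_val_eq {R : Type*} [AddCommMonoid R] {n : ℕ} (m : ℕ) (x : R) :
    ∑ j : Fin n, (if (j : ℕ) = m then x else 0) = if m < n then x else 0 := by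
  rw [Fin.sum_univ_eq_sum_range (fun j => if j = m then x else 0), Finset.sum_ite_eq']
  simp

lemma ehrenfestQ0_mem_rowStochastic {M : ℕ} (hM : 1 ≤ M) :
    ehrenfestQ0 M ∈ Matrix.rowStochastic ℝ (Fin (M + 1)) := by
  refine Matrix.mem_rowStochastic_iff_sum.2 ⟨fun k j => ?_, fun k => ?_⟩
  · have hk : ((k : ℕ) : ℝ) ≤ M := by exact_mod_cast Nat.lt_succ_iff.mp k.isLt
    unfold ehrenfestQ0
    split_ifs
    · positivity
    · exact div_nonneg (sub_nonneg.2 hk) M.cast_nonneg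
    · rfl
  · -- at `k = 0` the truncated `k - 1` adds a spurious `j = 0` term, of weight `k / M = 0`
    have hsplit : ∀ j : Fin (M + 1), ehrenfestQ0 M k j =
        (if (j : ℕ) = k - 1 then ((k : ℕ) : ℝ) / M else 0) +
        (if (j : ℕ) = k + 1 then ((M : ℝ) - k) / M else 0) := by
      intro j
      unfold ehrenfestQ0
      split_ifs <;> first | omega | simp [show (k : ℕ) = 0 by omega] | ring
    simp only [hsplit, Finset.sum_add_distrib, Fin.sum_ite_val_eq]
    rw [if_pos (by omega)]
    split_ifs with hk
    · field_simp
      ring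
    · rw [show (k : ℕ) = M by omega]
      field_simp
      simp

lemma ehrenfestQ0_apply_eq_zero {M : ℕ} {k j : Fin (M + 1)} (h₁ : (j : ℕ) + 1 ≠ k)
    (h₂ : (j : ℕ) ≠ k + 1) : ehrenfestQ0 M k j = 0 := by
  rw [ehrenfestQ0, if_neg h₁, if_neg h₂]

lemma sum_ehrenfestQ0_mul {M : ℕ} (j : Fin (M + 1)) (hj : (j : ℕ) < M) (f : Fin (M + 1) → ℝ) :
    ∑ k, ehrenfestQ0 M k j * f k =
      ehrenfestQ0 M ⟨(j : ℕ) - 1, by omega⟩ j * f ⟨(j : ℕ) - 1, by omega⟩ +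
        ehrenfestQ0 M ⟨(j : ℕ) + 1, by omega⟩ j * f ⟨(j : ℕ) + 1, by omega⟩ := by
  refine Finset.sum_eq_add _ _ (by simp [Fin.ext_iff]) (fun k _ hk => ?_) (by simp) (by simp)
  simp only [ne_eq, Fin.ext_iff] at hk
  rw [ehrenfestQ0_apply_eq_zero (by omega) (by omega), zero_mul]

/-- For `1 ≤ j ≤ M−1` and `s > 0`, the Laplace-domain solution satisfies
`(1 + s^β) p̃_{i,j}(s) = s^(β−1) δ_{ij} + q_{j−1,j} p̃_{i,j−1}(s) + q_{j+1,j} p̃_{i,j+1}(s)`. -/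
theorem rladLaplaceSol_equation (M : ℕ) (β : ℝ)
    (i j : Fin (M + 1)) (hj1 : 1 ≤ (j : ℕ)) (hj2 : (j : ℕ) ≤ M - 1) (s : ℝ) (hs : 0 < s) :
    (1 + s ^ β) * rladLaplaceSol M β i j s =
      s ^ (β - 1) * (if i = j then 1 else 0) +
        ehrenfestQ0 M ⟨(j : ℕ) - 1, by omega⟩ j *
          rladLaplaceSol M β i ⟨(j : ℕ) - 1, by omega⟩ s +
        ehrenfestQ0 M ⟨(j : ℕ) + 1, by omega⟩ j *
          rladLaplaceSol M β i ⟨(j : ℕ) + 1, by omega⟩ s := by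
  have hQ := ehrenfestQ0_mem_rowStochastic (M := M) (by omega)
  have hu : 1 < 1 + s ^ β := by linarith [Real.rpow_pos_of_pos hs β]
  rw [rladLaplaceSol, Matrix.mul_tsum_pow_apply_div_pow _ _ (by positivity) _ _ fun k =>
    summable_mul_div_pow_succ (Matrix.abs_pow_apply_le_one_of_mem_rowStochastic hQ · i k) _ hu,
    sum_ehrenfestQ0_mul j (by omega), add_assoc]
  rfl
end
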